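/- Define f_zero : ℝ⁵ → ℝ by f_zero(x, y, p, q₁, q₂) = 45·(1−x) + 5·x + 50·y + (90·x − 45·(1−x))·p + (10·(1−x) − 5·x)·q₁ + (100·(1−y) − 50·y)·q₂. Then the supremum over (x, y) ∈ [0,1] × [0,1] of the infimum over (p, q₁, q₂) ∈ [1/10, 9/10]³ of f_zero(x, y, p, q₁, q₂) equals 131/2 (i.e., 65½). -/

import Mathlib

/-!
The game has a saddle point in pure strategies. If the agent plays `x = 1/3`, `y = 2/3`, the
coefficients of `p` and `q₂` vanish and `f_zero = 65 + 5 q₁ ≥ 131/2`. If nature plays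
`p = 83/270`, `q₁ = 1/10`, `q₂ = 1/3`, the coefficients of `x` and `y` vanish and
`f_zero = 131/2` identically, so no agent strategy guarantees more.
-/

noncomputable def fZero (x y p q₁ q₂ : ℝ) : ℝ :=
  45 * (1 - x) + 5 * x + 50 * y + (90 * x - 45 * (1 - x)) * p
    + (10 * (1 - x) - 5 * x) * q₁ + (100 * (1 - y) - 50 * y) * q₂

open Set

theorem csSup_csInf_eq_of_isSaddlePoint {α β : Type*} {f : α → β → ℝ}
    {A : Set α} {B : Set β} {a : α} {b : β} (ha : a ∈ A) (hb : b ∈ B)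
    (hbdd : ∀ x ∈ A, BddBelow (f x '' B))
    (hmin : ∀ y ∈ B, f a b ≤ f a y) (hmax : ∀ x ∈ A, f x b ≤ f a b) :
    sSup {v | ∃ x ∈ A, v = sInf {w | ∃ y ∈ B, w = f x y}} = f a b := by
  have hval : sInf {w | ∃ y ∈ B, w = f a y} = f a b :=
    IsLeast.csInf_eq ⟨⟨b, hb, rfl⟩, by rintro _ ⟨y, hy, rfl⟩; exact hmin y hy⟩
  refine IsGreatest.csSup_eq ⟨⟨a, ha, hval.symm⟩, ?_⟩
  rintro _ ⟨x, hx, rfl⟩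
  have hbdd' : BddBelow {w | ∃ y ∈ B, w = f x y} := by
    simpa only [image, eq_comm] using hbdd x hx
  exact (csInf_le hbdd' ⟨b, hb, rfl⟩).trans (hmax x hx)

theorem fZero_one_third_two_thirds (p q₁ q₂ : ℝ) :
    fZero (1/3) (2/3) p q₁ q₂ = 65 + 5 * q₁ := by
  unfold fZero; ring

theorem fZero_nature_saddle (x y : ℝ) : fZero x y (83/270) (1/10) (1/3) = 131 / 2 := by
  unfold fZero; ring

theorem zeroStickiness_optimal_value :
    sSup {v : ℝ | ∃ x ∈ Set.Icc (0 : ℝ) 1, ∃ y ∈ Set.Icc (0 : ℝ) 1,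
        v = sInf {w : ℝ | ∃ p ∈ Set.Icc (1/10 : ℝ) (9/10), ∃ q₁ ∈ Set.Icc (1/10 : ℝ) (9/10),
          ∃ q₂ ∈ Set.Icc (1/10 : ℝ) (9/10), w = fZero x y p q₁ q₂}} = 131 / 2 := by
  set I : Set ℝ := Icc (1/10) (9/10)
  have hsaddle := csSup_csInf_eq_of_isSaddlePoint
    (f := fun (z : ℝ × ℝ) (w : ℝ × ℝ × ℝ) ↦ fZero z.1 z.2 w.1 w.2.1 w.2.2)
    (A := Icc 0 1 ×ˢ Icc 0 1) (B := I ×ˢ I ×ˢ I) (a := (1/3, 2/3)) (b := (83/270, 1/10, 1/3))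
    (by norm_num) (by norm_num [I])
    (fun _ _ ↦ (isCompact_Icc.prod (isCompact_Icc.prod isCompact_Icc)).bddBelow_image
      (by unfold fZero; fun_prop))
    (fun w hw ↦ by simp only [fZero_one_third_two_thirds]; linarith [hw.2.1.1])
    (fun z _ ↦ by simp only [fZero_nature_saddle]; rfl)
  simpa only [fZero_nature_saddle, mem_prod, Prod.exists, and_assoc, exists_and_left] using hsaddle
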